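/- (Duality theorem for negative knowledge) Under the same assumptions (s ∈ F(p) for all p, nontriviality), M,s ⊨ K_i ¬p iff M_gg, τ(s) ⊨ K_i ¬p: i.e., (∀ t, (s,t) ∈ E(i) → t ∉ F(p)) iff every ultrafilter 𝕌 agreeing with τ(s) on G(i) fails the generated valuation of p. -/
import Mathlib


namespace Paper

variable {S P I : Type*}

/-- Possible arguments: nonempty subsets of the set of worlds. -/
abbrev Arg (S : Type*) := {U : Set S // U.Nonempty}

/-- Generated attack relation: `atk F p U V` means `(U,V) ∈ A(p)`, i.e. `V` attacks `U`
w.r.t. `p`: ∃ t ∈ U, ∀ r ∈ V, exactly one of t, r lies in F p. -/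
def atk (F : P → Set S) (p : P) (U V : Arg S) : Prop :=
  ∃ t ∈ U.1, ∀ r ∈ V.1, (t ∈ F p ∧ r ∉ F p) ∨ (t ∉ F p ∧ r ∈ F p)

/-- Strength preorder: `str F U V` means `U ≤ V` (U at least as strong as V). -/
def str (F : P → Set S) (U V : Arg S) : Prop :=
  ∀ (p : P) (W : Arg S), atk F p W V → atk F p W U

/-- The singleton argument {t}. -/
def sArg (t : S) : Arg S := ⟨{t}, Set.singleton_nonempty t⟩

/-- τ(t) = {U : {t} ≤ U}. -/
def tau (F : P → Set S) (t : S) : Set (Arg S) := {U | str F (sArg t) U}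

/-- A filter over a preorder-like relation `le`. -/
structure IsPFilter {α : Type*} (le : α → α → Prop) (F : Set α) : Prop where
  nonempty : F.Nonempty
  upward : ∀ U ∈ F, ∀ W, le U W → W ∈ F
  directed : ∀ U ∈ F, ∀ V ∈ F, ∃ W ∈ F, le W U ∧ le W V

/-- An ultrafilter over `le`: a proper filter maximal among filters under inclusion. -/
def IsUltra {α : Type*} (le : α → α → Prop) (F : Set α) : Prop :=
  IsPFilter le F ∧ F ≠ Set.univ ∧ ∀ G, IsPFilter le G → F ⊆ G → G = F

/-- Strength preorder on an abstract argument model with attack `A`. -/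
def le' {W P : Type*} (A : P → W → W → Prop) (U V : W) : Prop :=
  ∀ p X, A p X V → A p X U

/-- Availability in the argument model generated at world `s`:
`G(i) = {U | [s]_i ⊆ U}`. -/
def Gav (E : I → S → S → Prop) (s : S) (i : I) : Set (Arg S) :=
  {U | ∀ u, E i s u → u ∈ U.1}


section Aux
variable {S P : Type*}

lemma str_trans (F : P → Set S) {U V W : Arg S} (h1 : str F U V) (h2 : str F V W) :
    str F U W := fun p X h => h1 p X (h2 p X h)

end Aux

/-- duality theorem, negative knowledge:
M,s ⊨ K_i ¬p iff M_gg, τ(s) ⊨ K_i ¬p. -/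
theorem duality_neg (E : I → S → S → Prop) (hE : ∀ i, Equivalence (E i))
    (F : P → Set S) (s : S) (hs : ∀ q, s ∈ F q)
    (hnontrivial : ∃ 𝕌 : Set (Arg S), IsUltra (str F) 𝕌) (i : I) (p : P) :
    (∀ t, E i s t → t ∉ F p) ↔
      (∀ 𝕌 : Set (Arg S), IsUltra (str F) 𝕌 →
        𝕌 ∩ Gav E s i = tau F s ∩ Gav E s i →
        ¬ (∃ U ∈ 𝕌, ∀ V ∈ 𝕌, str F V U → ¬ atk F p V (sArg s))) := by
  have hsp := hs p
  have hL : ¬ (∀ t, E i s t → t ∉ F p) := fun h => h s ((hE i).refl s) hsp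
  refine iff_of_false hL ?_
  intro hR
  -- From nontriviality, extract some q₀, x₀ with x₀ ∉ F q₀.
  obtain ⟨𝕌0, hfil, hproper, -⟩ := hnontrivial
  obtain ⟨a, ha⟩ := hfil.nonempty
  obtain ⟨q0, x0, hx0⟩ : ∃ q x, x ∉ F q := by
    obtain ⟨U, hU⟩ : ∃ U : Arg S, U ∉ 𝕌0 := by
      by_contra h
      push_neg at h
      exact hproper (Set.eq_univ_of_forall h)
    have hns : ¬ str F a U := fun h => hU (hfil.upward a ha U h)
    simp only [str, not_forall] at hns
    obtain ⟨q, X, hatk, -⟩ := hns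
    obtain ⟨t, -, hopp⟩ := hatk
    obtain ⟨r, hr⟩ := U.2
    rcases hopp r hr with ⟨-, hrn⟩ | ⟨htn, -⟩
    · exact ⟨q, r, hrn⟩
    · exact ⟨q, t, htn⟩
  -- tau F s is a filter
  have htau_fil : IsPFilter (str F) (tau F s) := by
    refine ⟨⟨sArg s, fun q X h => h⟩, ?_, ?_⟩
    · intro U hU W hUW
      exact str_trans F hU hUW
    · intro U hU V hV
      exact ⟨sArg s, fun q X h => h, hU, hV⟩
  -- tau F s is proper
  have htau_proper : tau F s ≠ Set.univ := by
    intro h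
    have hx : sArg x0 ∈ tau F s := h ▸ Set.mem_univ _
    have hatk : atk F q0 (sArg s) (sArg x0) := by
      refine ⟨s, rfl, fun r hr => Or.inl ⟨hs q0, ?_⟩⟩
      have hr' : r = x0 := hr
      subst hr'; exact hx0
    obtain ⟨t, ht, hopp⟩ := hx q0 (sArg s) hatk
    have ht2 : s = t := Eq.symm ht
    subst ht2
    rcases hopp s rfl with ⟨h1, h2⟩ | ⟨h1, h2⟩
    · exact h2 h1
    · exact h1 h2
  -- tau F s is maximal
  have htau_max : ∀ G, IsPFilter (str F) G → tau F s ⊆ G → G = tau F s := by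
    intro G hG hsub
    refine Set.Subset.antisymm ?_ hsub
    intro U hU
    by_contra hnot
    simp only [tau, Set.mem_setOf_eq, str, not_forall] at hnot
    obtain ⟨q, X, hatk, hnatk⟩ := hnot
    -- X ⊆ F q
    have hX : ∀ x ∈ X.1, x ∈ F q := by
      intro x hx
      by_contra hxn
      exact hnatk ⟨x, hx, fun r hr => by
        have hr' : r = s := hr
        subst hr'; exact Or.inr ⟨hxn, hs q⟩⟩
    obtain ⟨t, htX, hopp⟩ := hatk
    have hUc : ∀ r ∈ U.1, r ∉ F q := by
      intro r hr
      rcases hopp r hr with ⟨-, hrn⟩ | ⟨htn, -⟩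
      · exact hrn
      · exact (htn (hX t htX)).elim
    obtain ⟨u0, hu0⟩ := U.2
    have hu0n : u0 ∉ F q := hUc u0 hu0
    have hsG : sArg s ∈ G := hsub (fun q X h => h)
    obtain ⟨W, hWG, hWU, hWs⟩ := hG.directed U hU (sArg s) hsG
    -- str F W U gives W ⊆ (F q)ᶜ
    have hW1 : ∀ r ∈ W.1, r ∉ F q := by
      have hat : atk F q (sArg s) U := ⟨s, rfl, fun r hr => Or.inl ⟨hs q, hUc r hr⟩⟩
      obtain ⟨t', ht', hopp'⟩ := hWU q (sArg s) hat
      have ht2 : s = t' := Eq.symm ht'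
      subst ht2
      intro r hr
      rcases hopp' r hr with ⟨-, hrn⟩ | ⟨hsn, -⟩
      · exact hrn
      · exact (hsn (hs q)).elim
    -- str F W (sArg s) gives W ⊆ F q
    have hW2 : ∀ r ∈ W.1, r ∈ F q := by
      have hat : atk F q (sArg u0) (sArg s) := ⟨u0, rfl, fun r hr => by
        have hr' : r = s := hr
        subst hr'; exact Or.inr ⟨hu0n, hs q⟩⟩
      obtain ⟨t', ht', hopp'⟩ := hWs q (sArg u0) hat
      have ht2 : u0 = t' := Eq.symm ht'
      subst ht2
      intro r hr
      rcases hopp' r hr with ⟨ht'm, -⟩ | ⟨-, hrm⟩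
      · exact (hu0n ht'm).elim
      · exact hrm
    obtain ⟨w, hw⟩ := W.2
    exact hW1 w hw (hW2 w hw)
  have hultra : IsUltra (str F) (tau F s) := ⟨htau_fil, htau_proper, htau_max⟩
  -- the witness U₀ = F p
  set U0 : Arg S := ⟨F p, ⟨s, hsp⟩⟩ with hU0def
  have hU0 : U0 ∈ tau F s := by
    intro q X hatk
    obtain ⟨t, htX, hopp⟩ := hatk
    exact ⟨t, htX, fun r hr => by
      have hr' : s = r := Eq.symm hr
      subst hr'; exact hopp s hsp⟩
  refine hR (tau F s) hultra rfl ⟨U0, hU0, ?_⟩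
  intro V hV hVU hatk
  obtain ⟨t, htV, hopp⟩ := hatk
  have htn : t ∉ F p := by
    rcases hopp s rfl with ⟨-, hsn⟩ | ⟨htn, -⟩
    · exact (hsn hsp).elim
    · exact htn
  have hat : atk F p (sArg t) U0 := ⟨t, rfl, fun r hr => Or.inr ⟨htn, hr⟩⟩
  obtain ⟨t', ht', hopp'⟩ := hVU p (sArg t) hat
  have ht2 : t = t' := Eq.symm ht'
  subst ht2
  rcases hopp' t htV with ⟨htm, -⟩ | ⟨-, htm⟩ <;> exact htn htm


end Paper
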